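/- Let 0 < α ≤ 1 < β and f continuous on [t₀, t₁]. Suppose that for every continuous ψ : [t₀, t₁] → ℝ with ∫_{t₀}^{t₁} (t₁−t)^(α−1) ψ(t) dt = 0 one has ∫_{t₀}^{t₁} (t₁−t)^(β−1) f(t) ψ(t) dt = 0. Then f(t) = 0 for every t ∈ [t₀, t₁). -/

import Mathlib

/-!
Write `(t₁ - t)^(β-1) f(t) = w(t) g(t)` with the weight `w(t) = (t₁ - t)^(α-1)`, positive and
integrable on `(t₀, t₁)`, and `g(t) = (t₁ - t)^(β-α) f(t)`, continuous on `[t₀, t₁]` because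
`β > α`. The hypothesis says that `g` is `w`-orthogonal to every continuous `ψ` with
`∫ w ψ = 0`. Testing it against `ψ = g - k`, where `k` is the `w`-mean of `g`, gives
`∫ w (g - k)² = 0`, so `g ≡ k`. Evaluating at `t₁` gives `k = 0`, and `f = 0` wherever the factor
`(t₁ - t)^(β-α)` is positive, that is on `[t₀, t₁)`.
-/

open MeasureTheory Set intervalIntegral

section WeightedDuBoisReymond

variable {a b : ℝ} {w : ℝ → ℝ}

theorem eqOn_zero_of_integral_mul_sq_eq_zero {φ : ℝ → ℝ} (hab : a < b)
    (hw : IntervalIntegrable w volume a b) (hw_pos : ∀ t ∈ Ioo a b, 0 < w t)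
    (hφ : ContinuousOn φ (Icc a b)) (h : ∫ t in a..b, w t * φ t ^ 2 = 0) :
    EqOn φ 0 (Icc a b) := by
  have hIoc : volume.restrict (Ioc a b) = volume.restrict (Ioo a b) :=
    Measure.restrict_congr_set Ioo_ae_eq_Ioc.symm
  have hnonneg : 0 ≤ᵐ[volume.restrict (Ioc a b)] fun t => w t * φ t ^ 2 := by
    rw [hIoc]
    filter_upwards [ae_restrict_mem measurableSet_Ioo] with t ht
    exact mul_nonneg (hw_pos t ht).le (sq_nonneg _)
  have hint : IntervalIntegrable (fun t => w t * φ t ^ 2) volume a b :=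
    hw.mul_continuousOn (by rw [uIcc_of_le hab.le]; exact hφ.pow 2)
  have hzero := (integral_eq_zero_iff_of_le_of_nonneg_ae hab.le hnonneg hint).mp h
  rw [hIoc] at hzero
  refine Measure.eqOn_Icc_of_ae_eq volume hab.ne ?_ hφ continuousOn_const
  rw [Measure.restrict_congr_set Ioo_ae_eq_Icc.symm]
  filter_upwards [hzero, ae_restrict_mem measurableSet_Ioo] with t ht htmem
  simpa [(hw_pos t htmem).ne'] using ht

/-- Du Bois-Reymond lemma with a weight. -/
theorem exists_eqOn_const_of_integral_mul_eq_zero {g : ℝ → ℝ} (hab : a < b)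
    (hw : IntervalIntegrable w volume a b) (hw_pos : ∀ t ∈ Ioo a b, 0 < w t)
    (hg : ContinuousOn g (Icc a b))
    (h : ∀ ψ : ℝ → ℝ, ContinuousOn ψ (Icc a b) → ∫ t in a..b, w t * ψ t = 0 →
      ∫ t in a..b, w t * g t * ψ t = 0) :
    ∃ k, EqOn g (fun _ => k) (Icc a b) := by
  have hW : (∫ t in a..b, w t) ≠ 0 := (intervalIntegral_pos_of_pos_on hw hw_pos hab).ne'
  set k := (∫ t in a..b, w t * g t) / ∫ t in a..b, w t
  have hint : ∀ φ, ContinuousOn φ (Icc a b) → IntervalIntegrable (fun t => w t * φ t) volume a b :=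
    fun φ hφ => hw.mul_continuousOn (by rwa [uIcc_of_le hab.le])
  have hψ : ContinuousOn (fun t => g t - k) (Icc a b) := hg.sub continuousOn_const
  have horth : ∫ t in a..b, w t * (g t - k) = 0 := by
    simp_rw [mul_sub]
    rw [integral_sub (hint g hg) (hw.mul_const k), intervalIntegral.integral_mul_const,
      mul_div_cancel₀ _ hW, sub_self]
  have hsq : ∫ t in a..b, w t * (g t - k) ^ 2 = 0 :=
    calc ∫ t in a..b, w t * (g t - k) ^ 2
        = ∫ t in a..b, (w t * g t * (g t - k) - k * (w t * (g t - k))) := by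
          congr 1; ext t; ring
      _ = (∫ t in a..b, w t * g t * (g t - k)) - k * ∫ t in a..b, w t * (g t - k) := by
          rw [integral_sub ((hint g hg).mul_continuousOn (by rwa [uIcc_of_le hab.le]))
            ((hint _ hψ).const_mul k), intervalIntegral.integral_const_mul]
      _ = 0 := by rw [h _ hψ horth, horth]; ring
  refine ⟨k, fun t ht => sub_eq_zero.mp ?_⟩
  exact eqOn_zero_of_integral_mul_sq_eq_zero hab hw hw_pos hψ hsq ht

end WeightedDuBoisReymond

theorem intervalIntegrable_sub_rpow {a b γ : ℝ} (hγ : 0 < γ) :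
    IntervalIntegrable (fun t => (b - t) ^ (γ - 1)) volume a b := by
  simpa using (intervalIntegrable_rpow' (a := b - a) (b := 0) (r := γ - 1)
    (by linarith)).comp_sub_left b

theorem rpow_sub_one_mul_rpow_sub {x y : ℝ} (hx : 0 ≤ x) (hy : y ≠ 1) (z : ℝ) :
    x ^ (z - 1) * x ^ (y - z) = x ^ (y - 1) := by
  rw [← Real.rpow_add' hx (by rwa [sub_add_sub_cancel', sub_ne_zero])]
  ring_nf

/-- Fractional Du Bois-Reymond lemma, case β > α. -/
theorem stmt5 (t₀ t₁ α β : ℝ) (f : ℝ → ℝ)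
    (ht : t₀ < t₁) (hα0 : 0 < α) (hα1 : α ≤ 1) (hβ : 1 < β)
    (hf : ContinuousOn f (Set.Icc t₀ t₁))
    (h : ∀ ψ : ℝ → ℝ, ContinuousOn ψ (Set.Icc t₀ t₁) →
      (∫ t in t₀..t₁, (t₁ - t) ^ (α - 1) * ψ t) = 0 →
      (∫ t in t₀..t₁, (t₁ - t) ^ (β - 1) * f t * ψ t) = 0) :
    ∀ t ∈ Set.Ico t₀ t₁, f t = 0 := by
  have hβα : 0 < β - α := by linarith
  have hfactor : ∀ t ∈ uIcc t₀ t₁, ∀ y,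
      (t₁ - t) ^ (α - 1) * ((t₁ - t) ^ (β - α) * f t) * y = (t₁ - t) ^ (β - 1) * f t * y := by
    intro t htmem y
    rw [uIcc_of_le ht.le] at htmem
    rw [← rpow_sub_one_mul_rpow_sub (sub_nonneg.mpr htmem.2) hβ.ne' α]
    ring
  have hg : ContinuousOn (fun t => (t₁ - t) ^ (β - α) * f t) (Icc t₀ t₁) :=
    ((continuousOn_const.sub continuousOn_id).rpow_const fun _ _ => Or.inr hβα.le).mul hf
  obtain ⟨k, hk⟩ := exists_eqOn_const_of_integral_mul_eq_zero ht (intervalIntegrable_sub_rpow hα0)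
    (fun t ht => Real.rpow_pos_of_pos (sub_pos.mpr ht.2) _) hg fun ψ hψ horth => by
      rw [integral_congr fun t ht => hfactor t ht (ψ t)]
      exact h ψ hψ horth
  have hk0 : k = 0 := by
    simpa [Real.zero_rpow hβα.ne'] using (hk (right_mem_Icc.mpr ht.le)).symm
  intro t htmem
  have hpos : 0 < (t₁ - t) ^ (β - α) := Real.rpow_pos_of_pos (sub_pos.mpr htmem.2) _
  simpa [hk0, hpos.ne'] using hk (Ico_subset_Icc_self htmem)
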